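/- Let F be a field of characteristic 2 and a, b, c, d ∈ F× with {a,b}₂ + {c,d}₂ = 0 in K₂(F)/2K₂(F). If {a,b}₂ ≠ 0, then the pure parts agree: ⟨a, b, ab⟩ ≅ ⟨c, d, cd⟩ as symmetric bilinear forms; in particular c = ax² + by² + abz² for some x, y, z ∈ F. -/

import Mathlib

/-!
For derivations `D, D'` of `F`, the pairing `{x, y} ↦ (D x D' y - D' x D y) / (x y)` (that is,
`dlog x ∧ dlog y`) is additive in each slot and kills Steinberg symbols, so in characteristic `2`
it is a homomorphism `K₂(F)/2 → F`. If `{a, b}₂ ≠ 0` then `a ∉ F²` and `b ∉ F²(a)`, and Zorn's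
lemma gives derivations with arbitrary values at `a`, `b`, and at any `t ∉ F²(a, b)`. Pairing
`{a, b}₂ + {c, d}₂ = 0` against them shows that every derivation killing `a, b` kills `c, d`, so
`c, d ∈ F²(a, b)`, and that the Jacobian of `(c, d)` with respect to `(a, b)` is `cd / ab`.
In coordinates over the basis `1, a, b, ab` of `F²(a, b)`, anisotropy of `⟨⟨a, b⟩⟩` turns this
into: `c` and `d` are values of `⟨a, b, ab⟩` at orthogonal vectors. Together with their cross
product these vectors form the isometry.
-/

namespace Milnor

variable (F : Type*) [Field F]

/-- Relations defining the Milnor K-group `K_n(F)`: multiplicativity in each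
slot and the Steinberg relation. -/
def rels (n : ℕ) : AddSubgroup (FreeAbelianGroup (Fin n → Fˣ)) :=
  AddSubgroup.closure
    ({ x | ∃ (i : Fin n) (u v w : Fin n → Fˣ),
        (∀ j, j ≠ i → u j = v j ∧ u j = w j) ∧ w i = u i * v i ∧
        x = FreeAbelianGroup.of w - FreeAbelianGroup.of u - FreeAbelianGroup.of v } ∪
     { x | ∃ (i j : Fin n) (u : Fin n → Fˣ), i ≠ j ∧ (u i : F) + (u j : F) = 1 ∧
        x = FreeAbelianGroup.of u })

/-- The Milnor K-group `K_n(F)`. -/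
def K (n : ℕ) := FreeAbelianGroup (Fin n → Fˣ) ⧸ rels F n

instance (n : ℕ) : AddCommGroup (K F n) :=
  QuotientAddGroup.Quotient.addCommGroup _

/-- The subgroup `2^m K_n(F)` of `K_n(F)`. -/
def modSub (n m : ℕ) : AddSubgroup (K F n) :=
  AddSubgroup.closure { x | ∃ y : K F n, x = (2 ^ m) • y }

/-- The quotient `K_n(F)/2^m K_n(F)`. -/
def KMod (n m : ℕ) := K F n ⧸ modSub F n m

instance (n m : ℕ) : AddCommGroup (KMod F n m) :=
  QuotientAddGroup.Quotient.addCommGroup _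

variable {F}

/-- The class of the symbol `{v 0, …, v (n-1)}` in `K_n(F)/2^m K_n(F)`. -/
def symbol {n : ℕ} (m : ℕ) (v : Fin n → Fˣ) : KMod F n m :=
  QuotientAddGroup.mk (QuotientAddGroup.mk (FreeAbelianGroup.of v) : K F n)

open scoped Classical in
/-- `{a,b}` in `K₂(F)/2^m K₂(F)` for field elements, with junk value `0` if an
entry vanishes.  So `s2 1 a b` is `{a,b}₂` and `s2 2 a b` is `{a,b}₄`. -/
noncomputable def s2 (m : ℕ) (a b : F) : KMod F 2 m :=
  if h : a ≠ 0 ∧ b ≠ 0 then symbol m ![Units.mk0 a h.1, Units.mk0 b h.2] else 0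

open scoped Classical in
/-- `{a,b,c,d}` in `K₄(F)/2^m K₄(F)` for field elements, junk value `0`. -/
noncomputable def s4 (m : ℕ) (a b c d : F) : KMod F 4 m :=
  if h : a ≠ 0 ∧ b ≠ 0 ∧ c ≠ 0 ∧ d ≠ 0 then
    symbol m ![Units.mk0 a h.1, Units.mk0 b h.2.1, Units.mk0 c h.2.2.1, Units.mk0 d h.2.2.2]
  else 0

end Milnor

open Milnor

namespace Milnor

variable {F : Type*} [Field F] {n m : ℕ}

def toKMod (n m : ℕ) : FreeAbelianGroup (Fin n → Fˣ) →+ KMod F n m :=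
  (QuotientAddGroup.mk' (modSub F n m)).comp (QuotientAddGroup.mk' (rels F n))

theorem toKMod_eq_zero {x : FreeAbelianGroup (Fin n → Fˣ)} (hx : x ∈ rels F n) :
    toKMod n m x = 0 := by
  change QuotientAddGroup.mk (QuotientAddGroup.mk x : K F n) = (0 : KMod F n m)
  rw [(QuotientAddGroup.eq_zero_iff _).2 hx]
  rfl

theorem symbol_eq_add (i : Fin n) {u v w : Fin n → Fˣ} (h : ∀ j ≠ i, u j = v j ∧ u j = w j)
    (hw : w i = u i * v i) : (symbol m w : KMod F n m) = symbol m u + symbol m v := by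
  have := toKMod_eq_zero (m := m) (AddSubgroup.subset_closure (Or.inl ⟨i, u, v, w, h, hw, rfl⟩))
  rwa [map_sub, map_sub, sub_sub, sub_eq_zero] at this

theorem symbol_eq_zero_of_add_eq_one {i j : Fin n} (hij : i ≠ j) {u : Fin n → Fˣ}
    (h : (u i : F) + u j = 1) : (symbol m u : KMod F n m) = 0 :=
  toKMod_eq_zero (AddSubgroup.subset_closure (Or.inr ⟨i, j, u, hij, h, rfl⟩))

theorem s2_of_ne_zero {a b : F} (ha : a ≠ 0) (hb : b ≠ 0) :
    (s2 m a b : KMod F 2 m) = symbol m ![Units.mk0 a ha, Units.mk0 b hb] :=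
  dif_pos ⟨ha, hb⟩

theorem s2_mul_left {a a' b : F} (ha : a ≠ 0) (ha' : a' ≠ 0) (hb : b ≠ 0) :
    (s2 m (a * a') b : KMod F 2 m) = s2 m a b + s2 m a' b := by
  rw [s2_of_ne_zero (mul_ne_zero ha ha') hb, s2_of_ne_zero ha hb, s2_of_ne_zero ha' hb]
  refine symbol_eq_add 0 (fun j hj => ?_) (Units.ext (by simp))
  fin_cases j
  · exact absurd rfl hj
  · exact ⟨rfl, rfl⟩

theorem s2_mul_right {a b b' : F} (ha : a ≠ 0) (hb : b ≠ 0) (hb' : b' ≠ 0) :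
    (s2 m a (b * b') : KMod F 2 m) = s2 m a b + s2 m a b' := by
  rw [s2_of_ne_zero ha (mul_ne_zero hb hb'), s2_of_ne_zero ha hb, s2_of_ne_zero ha hb']
  refine symbol_eq_add 1 (fun j hj => ?_) (Units.ext (by simp))
  fin_cases j
  · exact ⟨rfl, rfl⟩
  · exact absurd rfl hj

theorem s2_eq_zero_of_add_eq_one {a b : F} (ha : a ≠ 0) (hb : b ≠ 0) (h : a + b = 1) :
    (s2 m a b : KMod F 2 m) = 0 := by
  rw [s2_of_ne_zero ha hb]
  exact symbol_eq_zero_of_add_eq_one (i := 0) (j := 1) (by decide) (by simpa using h)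

theorem KMod.add_self (x : KMod F n 1) : x + x = 0 := by
  induction x using QuotientAddGroup.induction_on with
  | H y =>
    change (QuotientAddGroup.mk (y + y) : KMod F n 1) = 0
    rw [QuotientAddGroup.eq_zero_iff]
    exact AddSubgroup.subset_closure ⟨y, by rw [pow_one, two_smul]⟩

theorem KMod.eq_of_add_eq_zero {x y : KMod F n 1} (h : x + y = 0) : y = x :=
  (eq_neg_of_add_eq_zero_right h).trans (neg_eq_of_add_eq_zero_right (KMod.add_self x))

theorem s2_sq_left {x b : F} (hx : x ≠ 0) (hb : b ≠ 0) : (s2 1 (x ^ 2) b : KMod F 2 1) = 0 := by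
  rw [sq, s2_mul_left hx hx hb, KMod.add_self]

theorem s2_sq_right {a x : F} (ha : a ≠ 0) (hx : x ≠ 0) : (s2 1 a (x ^ 2) : KMod F 2 1) = 0 := by
  rw [sq, s2_mul_right ha hx hx, KMod.add_self]

theorem s2_inv_left {a b : F} (ha : a ≠ 0) (hb : b ≠ 0) :
    (s2 1 a⁻¹ b : KMod F 2 1) = s2 1 a b := by
  refine KMod.eq_of_add_eq_zero ?_
  rw [← s2_mul_left ha (inv_ne_zero ha) hb, mul_inv_cancel₀ ha]
  simpa using s2_sq_left one_ne_zero hb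

def KMod.lift {n m : ℕ} {G : Type*} [AddCommGroup G] (f : FreeAbelianGroup (Fin n → Fˣ) →+ G)
    (hf : rels F n ≤ f.ker) (hG : ∀ g : G, 2 ^ m • g = 0) : KMod F n m →+ G :=
  QuotientAddGroup.lift (modSub F n m) (QuotientAddGroup.lift (rels F n) f hf) <| by
    rw [modSub, AddSubgroup.closure_le]
    rintro _ ⟨y, rfl⟩
    change QuotientAddGroup.lift (rels F n) f hf (2 ^ m • (y : FreeAbelianGroup _ ⧸ rels F n)) = 0
    exact (map_nsmul (QuotientAddGroup.lift (rels F n) f hf) _ y).trans (hG _)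

theorem KMod.lift_symbol {n m : ℕ} {G : Type*} [AddCommGroup G]
    (f : FreeAbelianGroup (Fin n → Fˣ) →+ G) (hf : rels F n ≤ f.ker) (hG : ∀ g : G, 2 ^ m • g = 0)
    (v : Fin n → Fˣ) : KMod.lift f hf hG (symbol m v) = f (FreeAbelianGroup.of v) :=
  rfl

section CharTwo

variable [CharP F 2]

theorem s2_self {a : F} (ha : a ≠ 0) : (s2 1 a a : KMod F 2 1) = 0 := by
  rcases eq_or_ne a 1 with rfl | ha1
  · simpa using s2_sq_left (one_ne_zero (α := F)) one_ne_zero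
  have h1a : 1 + a ≠ 0 := by
    rwa [Ne, CharTwo.add_eq_zero, eq_comm]
  have h1a' : 1 + a⁻¹ ≠ 0 := by
    rwa [Ne, CharTwo.add_eq_zero, eq_comm, inv_eq_one]
  have hst : (s2 1 a (1 + a) : KMod F 2 1) = 0 :=
    s2_eq_zero_of_add_eq_one ha h1a (by rw [add_left_comm, CharTwo.add_self_eq_zero, add_zero])
  have hst' : (s2 1 a (1 + a⁻¹) : KMod F 2 1) = 0 := by
    rw [← s2_inv_left ha h1a']
    exact s2_eq_zero_of_add_eq_one (inv_ne_zero ha) h1a'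
      (by rw [add_left_comm, CharTwo.add_self_eq_zero, add_zero])
  rwa [show 1 + a = a * (1 + a⁻¹) by field_simp; ring, s2_mul_right ha ha h1a', hst',
    add_zero] at hst

theorem s2_sq_add_self {a x : F} (ha : a ≠ 0) (hxa : x ^ 2 + a ≠ 0) :
    (s2 1 a (x ^ 2 + a) : KMod F 2 1) = 0 := by
  rcases eq_or_ne x 0 with rfl | hx
  · simpa using s2_self ha
  have hx2 : x ^ 2 ≠ 0 := pow_ne_zero 2 hx
  have hy : 1 + a / x ^ 2 ≠ 0 := by
    rwa [show 1 + a / x ^ 2 = (x ^ 2 + a) / x ^ 2 by field_simp, div_ne_zero_iff, and_iff_left hx2]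
  have hst : (s2 1 (a * (x ^ 2)⁻¹) (1 + a / x ^ 2) : KMod F 2 1) = 0 :=
    s2_eq_zero_of_add_eq_one (mul_ne_zero ha (inv_ne_zero hx2)) hy
      (by rw [div_eq_mul_inv, add_left_comm, CharTwo.add_self_eq_zero, add_zero])
  rw [s2_mul_left ha (inv_ne_zero hx2) hy, s2_inv_left hx2 hy,
    s2_sq_left hx hy, add_zero] at hst
  rw [show x ^ 2 + a = x ^ 2 * (1 + a / x ^ 2) by field_simp, s2_mul_right ha hx2 hy,
    s2_sq_right ha hx, hst, add_zero]

theorem s2_sq_add_mul_sq {a x y : F} (ha : a ≠ 0) (h : x ^ 2 + a * y ^ 2 ≠ 0) :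
    (s2 1 a (x ^ 2 + a * y ^ 2) : KMod F 2 1) = 0 := by
  rcases eq_or_ne y 0 with rfl | hy
  · rw [zero_pow two_ne_zero, mul_zero, add_zero] at h ⊢
    exact s2_sq_right ha (by rintro rfl; simp at h)
  have hy2 : y ^ 2 ≠ 0 := pow_ne_zero 2 hy
  have hxa : (x / y) ^ 2 + a ≠ 0 := by
    rwa [div_pow, show (x ^ 2 / y ^ 2 + a) = (x ^ 2 + a * y ^ 2) / y ^ 2 by field_simp,
      div_ne_zero_iff, and_iff_left hy2]
  rw [show x ^ 2 + a * y ^ 2 = y ^ 2 * ((x / y) ^ 2 + a) by field_simp,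
    s2_mul_right ha hy2 hxa, s2_sq_right ha hy, s2_sq_add_self ha hxa, add_zero]

end CharTwo

end Milnor

namespace Derivation

variable {F : Type*} [Field F] (D D' : Derivation ℤ F F)

/-- `dlog x ∧ dlog y` evaluated on the pair of derivations `(D, D')`. -/
def dlogWedge (x y : F) : F := (D x * D' y - D' x * D y) / (x * y)

theorem dlogWedge_mul_left {x x' y : F} (hx : x ≠ 0) (hx' : x' ≠ 0) (hy : y ≠ 0) :
    dlogWedge D D' (x * x') y = dlogWedge D D' x y + dlogWedge D D' x' y := by
  simp only [dlogWedge, leibniz, smul_eq_mul]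
  field_simp
  ring

theorem dlogWedge_mul_right {x y y' : F} (hx : x ≠ 0) (hy : y ≠ 0) (hy' : y' ≠ 0) :
    dlogWedge D D' x (y * y') = dlogWedge D D' x y + dlogWedge D D' x y' := by
  simp only [dlogWedge, leibniz, smul_eq_mul]
  field_simp
  ring

theorem dlogWedge_eq_zero_of_add_eq_one {x y : F} (h : x + y = 1) : dlogWedge D D' x y = 0 := by
  rw [dlogWedge, eq_sub_of_add_eq' h, map_sub, map_sub, map_one_eq_zero, map_one_eq_zero]
  ring

theorem dlogWedge_swap (x y : F) : dlogWedge D D' y x = -dlogWedge D D' x y := by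
  rw [dlogWedge, dlogWedge, mul_comm y x, ← neg_div]
  ring

def freeDlogWedge : FreeAbelianGroup (Fin 2 → Fˣ) →+ F :=
  FreeAbelianGroup.lift fun v => dlogWedge D D' (v 0) (v 1)

theorem rels_le_ker_freeDlogWedge : rels F 2 ≤ (freeDlogWedge D D').ker := by
  rw [rels, AddSubgroup.closure_le]
  rintro x (⟨i, u, v, w, huvw, hw, rfl⟩ | ⟨i, j, u, hij, hu, rfl⟩) <;>
    simp only [SetLike.mem_coe, AddMonoidHom.mem_ker, map_sub, freeDlogWedge,
      FreeAbelianGroup.lift_apply_of]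
  · fin_cases i
    · obtain ⟨h1, h1'⟩ := huvw 1 (by decide)
      simp only [Fin.zero_eta] at hw ⊢
      rw [hw, ← h1', ← h1, Units.val_mul,
        dlogWedge_mul_left _ _ (u 0).ne_zero (v 0).ne_zero (u 1).ne_zero, sub_sub, sub_self]
    · obtain ⟨h0, h0'⟩ := huvw 0 (by decide)
      simp only [Fin.mk_one] at hw ⊢
      rw [hw, ← h0', ← h0, Units.val_mul,
        dlogWedge_mul_right _ _ (u 0).ne_zero (u 1).ne_zero (v 1).ne_zero, sub_sub, sub_self]
  · fin_cases i <;> fin_cases j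
    · exact absurd rfl hij
    · exact dlogWedge_eq_zero_of_add_eq_one _ _ hu
    · rw [dlogWedge_swap, neg_eq_zero]
      exact dlogWedge_eq_zero_of_add_eq_one _ _ hu
    · exact absurd rfl hij

variable [CharP F 2]

def kModDlogWedge : KMod F 2 1 →+ F :=
  KMod.lift (freeDlogWedge D D') (rels_le_ker_freeDlogWedge D D')
    fun g => by rw [pow_one, two_nsmul, CharTwo.add_self_eq_zero]

theorem kModDlogWedge_s2 {x y : F} (hx : x ≠ 0) (hy : y ≠ 0) :
    kModDlogWedge D D' (s2 1 x y) = dlogWedge D D' x y := by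
  rw [s2_of_ne_zero hx hy, kModDlogWedge, KMod.lift_symbol, freeDlogWedge,
    FreeAbelianGroup.lift_apply_of]
  simp

end Derivation

namespace Subfield

variable {F : Type*} [Field F]

theorem eq_and_eq_of_add_mul_eq (K : Subfield F) {t e f e' f' : F} (ht : t ∉ K) (he : e ∈ K)
    (hf : f ∈ K) (he' : e' ∈ K) (hf' : f' ∈ K) (h : e + f * t = e' + f' * t) :
    e = e' ∧ f = f' := by
  by_cases hff : f = f'
  · subst hff
    exact ⟨add_right_cancel h, rfl⟩
  · refine absurd ?_ ht
    rw [show t = (e' - e) / (f - f') by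
      rw [eq_div_iff (sub_ne_zero.2 hff)]; linear_combination h]
    exact K.div_mem (K.sub_mem he' he) (K.sub_mem hf hf')

def adjoinOfSqMem (K : Subfield F) (hK : ∀ x : F, x ^ 2 ∈ K) (t : F) : Subfield F where
  carrier := {z | ∃ e ∈ K, ∃ f ∈ K, z = e + f * t}
  zero_mem' := ⟨0, K.zero_mem, 0, K.zero_mem, by ring⟩
  one_mem' := ⟨1, K.one_mem, 0, K.zero_mem, by ring⟩
  add_mem' := by
    rintro _ _ ⟨e, he, f, hf, rfl⟩ ⟨e', he', f', hf', rfl⟩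
    exact ⟨e + e', K.add_mem he he', f + f', K.add_mem hf hf', by ring⟩
  neg_mem' := by
    rintro _ ⟨e, he, f, hf, rfl⟩
    exact ⟨-e, K.neg_mem he, -f, K.neg_mem hf, by ring⟩
  mul_mem' := by
    rintro _ _ ⟨e, he, f, hf, rfl⟩ ⟨e', he', f', hf', rfl⟩
    exact ⟨e * e' + f * f' * t ^ 2,
      K.add_mem (K.mul_mem he he') (K.mul_mem (K.mul_mem hf hf') (hK t)),
      e * f' + f * e', K.add_mem (K.mul_mem he hf') (K.mul_mem hf he'), by ring⟩
  inv_mem' := by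
    rintro _ ⟨e, he, f, hf, rfl⟩
    -- `z⁻¹ = z * (z ^ 2)⁻¹` and `z ^ 2 ∈ K`
    have hinv := K.inv_mem (hK (e + f * t))
    refine ⟨e * ((e + f * t) ^ 2)⁻¹, K.mul_mem he hinv, f * ((e + f * t) ^ 2)⁻¹,
      K.mul_mem hf hinv, ?_⟩
    rcases eq_or_ne (e + f * t) 0 with h | h
    · simp [h]
    · field_simp

variable {K : Subfield F} {hK : ∀ x : F, x ^ 2 ∈ K} {t z : F}

theorem mem_adjoinOfSqMem : z ∈ K.adjoinOfSqMem hK t ↔ ∃ e ∈ K, ∃ f ∈ K, z = e + f * t :=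
  Iff.rfl

theorem le_adjoinOfSqMem : K ≤ K.adjoinOfSqMem hK t :=
  fun z hz => ⟨z, hz, 0, K.zero_mem, by ring⟩

theorem self_mem_adjoinOfSqMem : t ∈ K.adjoinOfSqMem hK t :=
  ⟨0, K.zero_mem, 1, K.one_mem, by ring⟩

end Subfield

/-- A derivation `dom → F`, encoded by a function on `F` whose values off `dom` are ignored. -/
structure PartialDerivation (F : Type*) [Field F] where
  dom : Subfield F
  sq_mem : ∀ x : F, x ^ 2 ∈ dom
  toFun : F → F
  map_add : ∀ x ∈ dom, ∀ y ∈ dom, toFun (x + y) = toFun x + toFun y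
  leibniz : ∀ x ∈ dom, ∀ y ∈ dom, toFun (x * y) = x * toFun y + y * toFun x
  map_sq : ∀ x : F, toFun (x ^ 2) = 0

namespace PartialDerivation

variable {F : Type*} [Field F]

instance : CoeFun (PartialDerivation F) fun _ => F → F := ⟨toFun⟩

instance : Preorder (PartialDerivation F) where
  le p q := p.dom ≤ q.dom ∧ ∀ x ∈ p.dom, q x = p x
  le_refl p := ⟨le_rfl, fun _ _ => rfl⟩
  le_trans p q r hpq hqr :=
    ⟨hpq.1.trans hqr.1, fun x hx => (hqr.2 x (hpq.1 hx)).trans (hpq.2 x hx)⟩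

theorem map_zero (p : PartialDerivation F) : p 0 = 0 := by
  simpa using p.map_sq 0

theorem map_one (p : PartialDerivation F) : p 1 = 0 := by
  simpa using p.map_sq 1

def zero (K : Subfield F) (hK : ∀ x : F, x ^ 2 ∈ K) : PartialDerivation F where
  dom := K
  sq_mem := hK
  toFun _ := 0
  map_add _ _ _ _ := by simp
  leibniz _ _ _ _ := by simp
  map_sq _ := rfl

def toDerivation (p : PartialDerivation F) (h : ∀ x, x ∈ p.dom) : Derivation ℤ F F :=
  Derivation.mk'
    (AddMonoidHom.toIntLinearMap
      { toFun := p, map_zero' := p.map_zero, map_add' := fun x y => p.map_add x (h x) y (h y) })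
    fun x y => p.leibniz x (h x) y (h y)

section Chain

variable {c : Set (PartialDerivation F)}

theorem apply_eq_of_isChain (hc : IsChain (· ≤ ·) c) {p q : PartialDerivation F} (hp : p ∈ c)
    (hq : q ∈ c) {x : F} (hxp : x ∈ p.dom) (hxq : x ∈ q.dom) : p x = q x := by
  rcases hc.total hp hq with h | h
  · exact (h.2 x hxp).symm
  · exact h.2 x hxq

theorem directed_dom (hc : IsChain (· ≤ ·) c) : Directed (· ≤ ·) fun p : c => p.1.dom :=
  hc.directedOn.directed_val.mono_comp _ fun _ _ h => h.1

theorem exists_mem_dom_of_mem_iSup (hc : IsChain (· ≤ ·) c) [Nonempty c] {x y : F}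
    (hx : x ∈ ⨆ p : c, p.1.dom) (hy : y ∈ ⨆ p : c, p.1.dom) :
    ∃ p ∈ c, x ∈ p.dom ∧ y ∈ p.dom := by
  obtain ⟨p, hxp⟩ := (Subfield.mem_iSup_of_directed (directed_dom hc)).1 hx
  obtain ⟨q, hyq⟩ := (Subfield.mem_iSup_of_directed (directed_dom hc)).1 hy
  obtain ⟨r, hpr, hqr⟩ := directed_dom hc p q
  exact ⟨r, r.2, hpr hxp, hqr hyq⟩

open scoped Classical in
noncomputable def chainFun (c : Set (PartialDerivation F)) (x : F) : F :=
  if h : ∃ p ∈ c, x ∈ p.dom then h.choose x else 0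

theorem chainFun_eq (hc : IsChain (· ≤ ·) c) {p : PartialDerivation F} (hp : p ∈ c) {x : F}
    (hx : x ∈ p.dom) : chainFun c x = p x := by
  have h : ∃ q ∈ c, x ∈ q.dom := ⟨p, hp, hx⟩
  rw [chainFun, dif_pos h]
  exact apply_eq_of_isChain hc h.choose_spec.1 hp h.choose_spec.2 hx

noncomputable def chainSup (hc : IsChain (· ≤ ·) c) (hne : c.Nonempty) : PartialDerivation F :=
  haveI : Nonempty c := hne.to_subtype
  { dom := ⨆ p : c, p.1.dom
    sq_mem := fun x => (Subfield.mem_iSup_of_directed (directed_dom hc)).2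
      ⟨⟨hne.some, hne.some_mem⟩, hne.some.sq_mem x⟩
    toFun := chainFun c
    map_add := fun x hx y hy => by
      obtain ⟨p, hp, hxp, hyp⟩ := exists_mem_dom_of_mem_iSup hc hx hy
      rw [chainFun_eq hc hp (p.dom.add_mem hxp hyp), chainFun_eq hc hp hxp,
        chainFun_eq hc hp hyp, p.map_add x hxp y hyp]
    leibniz := fun x hx y hy => by
      obtain ⟨p, hp, hxp, hyp⟩ := exists_mem_dom_of_mem_iSup hc hx hy
      rw [chainFun_eq hc hp (p.dom.mul_mem hxp hyp), chainFun_eq hc hp hxp,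
        chainFun_eq hc hp hyp, p.leibniz x hxp y hyp]
    map_sq := fun x => by
      rw [chainFun_eq hc hne.some_mem (hne.some.sq_mem x), hne.some.map_sq] }

theorem le_chainSup (hc : IsChain (· ≤ ·) c) {p : PartialDerivation F} (hp : p ∈ c) :
    p ≤ chainSup hc ⟨p, hp⟩ :=
  haveI : Nonempty c := ⟨⟨p, hp⟩⟩
  ⟨le_iSup (fun q : c => q.1.dom) ⟨p, hp⟩, fun _ hx => chainFun_eq hc hp hx⟩

end Chain

open scoped Classical in
/-- The Leibniz rule on `e + f t`, with `l` the value at `t`. -/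
noncomputable def extendFun (p : PartialDerivation F) (t l z : F) : F :=
  if h : ∃ ef : F × F, ef.1 ∈ p.dom ∧ ef.2 ∈ p.dom ∧ z = ef.1 + ef.2 * t then
    p h.choose.1 + t * p h.choose.2 + h.choose.2 * l
  else 0

theorem extendFun_add_mul (p : PartialDerivation F) {t : F} (ht : t ∉ p.dom) (l : F) {e f : F}
    (he : e ∈ p.dom) (hf : f ∈ p.dom) :
    p.extendFun t l (e + f * t) = p e + t * p f + f * l := by
  have h : ∃ ef : F × F, ef.1 ∈ p.dom ∧ ef.2 ∈ p.dom ∧ e + f * t = ef.1 + ef.2 * t :=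
    ⟨(e, f), he, hf, rfl⟩
  obtain ⟨he', hf', heq⟩ := h.choose_spec
  obtain ⟨h1, h2⟩ := p.dom.eq_and_eq_of_add_mul_eq ht he' hf' he hf heq.symm
  rw [extendFun, dif_pos h, h1, h2]

variable [CharP F 2]

noncomputable def extend (p : PartialDerivation F) {t : F} (ht : t ∉ p.dom) (l : F) :
    PartialDerivation F where
  dom := p.dom.adjoinOfSqMem p.sq_mem t
  sq_mem x := Subfield.le_adjoinOfSqMem (p.sq_mem x)
  toFun := p.extendFun t l
  map_add := by
    rintro _ ⟨e, he, f, hf, rfl⟩ _ ⟨e', he', f', hf', rfl⟩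
    rw [show e + f * t + (e' + f' * t) = (e + e') + (f + f') * t by ring,
      extendFun_add_mul p ht l (p.dom.add_mem he he') (p.dom.add_mem hf hf'),
      extendFun_add_mul p ht l he hf, extendFun_add_mul p ht l he' hf',
      p.map_add e he e' he', p.map_add f hf f' hf']
    ring
  leibniz := by
    rintro _ ⟨e, he, f, hf, rfl⟩ _ ⟨e', he', f', hf', rfl⟩
    have hee' := p.dom.mul_mem he he'
    have hff't := p.dom.mul_mem (p.dom.mul_mem hf hf') (p.sq_mem t)
    have hef' := p.dom.mul_mem he hf'
    have hfe' := p.dom.mul_mem hf he'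
    rw [show (e + f * t) * (e' + f' * t) = (e * e' + f * f' * t ^ 2) + (e * f' + f * e') * t by
        ring,
      extendFun_add_mul p ht l (p.dom.add_mem hee' hff't) (p.dom.add_mem hef' hfe'),
      extendFun_add_mul p ht l he hf, extendFun_add_mul p ht l he' hf',
      p.map_add _ hee' _ hff't, p.map_add _ hef' _ hfe', p.leibniz _ he _ he',
      p.leibniz _ (p.dom.mul_mem hf hf') _ (p.sq_mem t), p.leibniz _ hf _ hf', p.map_sq t,
      p.leibniz _ he _ hf', p.leibniz _ hf _ he']
    linear_combination (-(f * f' * l * t)) * CharTwo.two_eq_zero (R := F)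
  map_sq x := by
    simpa [p.map_sq, p.map_zero] using extendFun_add_mul p ht l (p.sq_mem x) p.dom.zero_mem

theorem le_extend (p : PartialDerivation F) {t : F} (ht : t ∉ p.dom) (l : F) :
    p ≤ p.extend ht l := by
  refine ⟨Subfield.le_adjoinOfSqMem (hK := p.sq_mem), fun x hx => ?_⟩
  show p.extendFun t l x = p x
  simpa [p.map_zero] using extendFun_add_mul p ht l hx p.dom.zero_mem

theorem extend_apply_self (p : PartialDerivation F) {t : F} (ht : t ∉ p.dom) (l : F) :
    p.extend ht l t = l := by
  show p.extendFun t l t = l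
  simpa [p.map_zero, p.map_one] using extendFun_add_mul p ht l p.dom.zero_mem p.dom.one_mem

theorem self_mem_extend (p : PartialDerivation F) {t : F} (ht : t ∉ p.dom) (l : F) :
    t ∈ (p.extend ht l).dom :=
  Subfield.self_mem_adjoinOfSqMem (hK := p.sq_mem)

theorem exists_derivation (p : PartialDerivation F) :
    ∃ D : Derivation ℤ F F, ∀ x ∈ p.dom, D x = p x := by
  obtain ⟨m, hpm, hmax⟩ := zorn_le_nonempty_Ici₀ p
    (fun c _ hc q hq => ⟨chainSup hc ⟨q, hq⟩, fun r hr => le_chainSup hc hr⟩) p le_rfl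
  have htop : ∀ x, x ∈ m.dom := by
    by_contra! ⟨t, ht⟩
    exact ht ((hmax (m.le_extend ht 0)).1 (m.self_mem_extend ht 0))
  exact ⟨m.toDerivation htop, fun x hx => hpm.2 x hx⟩

theorem exists_derivation_of_notMem (p : PartialDerivation F) {t : F} (ht : t ∉ p.dom)
    (l : F) : ∃ D : Derivation ℤ F F, (∀ x ∈ p.dom, D x = p x) ∧ D t = l := by
  obtain ⟨D, hD⟩ := (p.extend ht l).exists_derivation
  refine ⟨D, fun x hx => ?_, ?_⟩
  · rw [hD x ((p.le_extend ht l).1 hx), (p.le_extend ht l).2 x hx]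
  · rw [hD t (p.self_mem_extend ht l), extend_apply_self]

end PartialDerivation

section CharTwo

variable {F : Type*} [Field F] [CharP F 2]

def sqSubfield (F : Type*) [Field F] [CharP F 2] : Subfield F := (frobenius F 2).fieldRange

theorem mem_sqSubfield {x : F} : x ∈ sqSubfield F ↔ ∃ y, y ^ 2 = x :=
  RingHom.mem_fieldRange

theorem sq_mem_sqSubfield (x : F) : x ^ 2 ∈ sqSubfield F :=
  mem_sqSubfield.2 ⟨x, rfl⟩

def sqAdjoin (a : F) : Subfield F := (sqSubfield F).adjoinOfSqMem sq_mem_sqSubfield a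

def sqAdjoin₂ (a b : F) : Subfield F :=
  (sqAdjoin a).adjoinOfSqMem (fun x => Subfield.le_adjoinOfSqMem (sq_mem_sqSubfield x)) b

theorem mem_sqAdjoin {a z : F} : z ∈ sqAdjoin a ↔ ∃ x y : F, z = x ^ 2 + a * y ^ 2 := by
  simp only [sqAdjoin, Subfield.mem_adjoinOfSqMem, mem_sqSubfield]
  constructor
  · rintro ⟨_, ⟨x, rfl⟩, _, ⟨y, rfl⟩, rfl⟩
    exact ⟨x, y, by ring⟩
  · rintro ⟨x, y, rfl⟩
    exact ⟨_, ⟨x, rfl⟩, _, ⟨y, rfl⟩, by ring⟩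

theorem exists_eq_of_mem_sqAdjoin₂ {a b z : F} (hz : z ∈ sqAdjoin₂ a b) :
    ∃ x y u v : F, z = x ^ 2 + a * y ^ 2 + b * u ^ 2 + a * b * v ^ 2 := by
  obtain ⟨e, he, f, hf, rfl⟩ := hz
  obtain ⟨x, y, rfl⟩ := mem_sqAdjoin.1 he
  obtain ⟨u, v, rfl⟩ := mem_sqAdjoin.1 hf
  exact ⟨x, y, u, v, by ring⟩

theorem notMem_sqSubfield_of_s2_ne_zero {a b : F} (ha : a ≠ 0) (hb : b ≠ 0)
    (hab : s2 1 a b ≠ (0 : KMod F 2 1)) : a ∉ sqSubfield F := by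
  rintro ⟨x, rfl⟩
  exact hab (s2_sq_left (by rintro rfl; simp at ha) hb)

theorem notMem_sqAdjoin_of_s2_ne_zero {a b : F} (ha : a ≠ 0) (hb : b ≠ 0)
    (hab : s2 1 a b ≠ (0 : KMod F 2 1)) : b ∉ sqAdjoin a := by
  intro h
  obtain ⟨x, y, rfl⟩ := mem_sqAdjoin.1 h
  exact hab (s2_sq_add_mul_sq ha hb)

theorem exists_derivation_apply_eq {a b : F} (ha : a ∉ sqSubfield F) (hb : b ∉ sqAdjoin a)
    (l m : F) : ∃ D : Derivation ℤ F F, D a = l ∧ D b = m := by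
  let p₀ := PartialDerivation.zero (sqSubfield F) sq_mem_sqSubfield
  obtain ⟨D, hD, hDb⟩ := (p₀.extend ha l).exists_derivation_of_notMem (t := b) hb m
  exact ⟨D, (hD a (p₀.self_mem_extend ha l)).trans (p₀.extend_apply_self ha l), hDb⟩

theorem mem_sqAdjoin₂_of_forall_derivation {a b c : F} (ha : a ∉ sqSubfield F)
    (hb : b ∉ sqAdjoin a) (hc : ∀ D : Derivation ℤ F F, D a = 0 → D b = 0 → D c = 0) :
    c ∈ sqAdjoin₂ a b := by
  by_contra hc'
  let p₀ := PartialDerivation.zero (sqSubfield F) sq_mem_sqSubfield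
  let p₁ := p₀.extend ha 0
  obtain ⟨D, hD, hDc⟩ := (p₁.extend (t := b) hb 0).exists_derivation_of_notMem (t := c) hc' 1
  have ha₁ : a ∈ p₁.dom := p₀.self_mem_extend ha 0
  have hDa : D a = 0 :=
    ((hD a ((p₁.le_extend hb 0).1 ha₁)).trans ((p₁.le_extend hb 0).2 a ha₁)).trans
      (p₀.extend_apply_self ha 0)
  have hDb : D b = 0 := (hD b (p₁.self_mem_extend hb 0)).trans (p₁.extend_apply_self hb 0)
  exact one_ne_zero (hDc.symm.trans (hc D hDa hDb))

theorem eq_zero_of_sq_add_sq_mul_eq_zero {a : F} (ha : a ∉ sqSubfield F) {x y : F}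
    (h : x ^ 2 + y ^ 2 * a = 0) : x = 0 ∧ y = 0 := by
  have hK := (sqSubfield F).zero_mem
  obtain ⟨hx, hy⟩ := (sqSubfield F).eq_and_eq_of_add_mul_eq ha (sq_mem_sqSubfield x)
    (sq_mem_sqSubfield y) hK hK (by rw [h]; ring)
  exact ⟨pow_eq_zero_iff two_ne_zero |>.1 hx, pow_eq_zero_iff two_ne_zero |>.1 hy⟩

theorem eq_zero_of_pfister_eq_zero {a b : F} (ha : a ∉ sqSubfield F) (hb : b ∉ sqAdjoin a)
    {x y z w : F}
    (h : x ^ 2 + a * y ^ 2 + b * z ^ 2 + a * b * w ^ 2 = 0) :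
    x = 0 ∧ y = 0 ∧ z = 0 ∧ w = 0 := by
  have hK : ∀ u v : F, u ^ 2 + v ^ 2 * a ∈ sqAdjoin a :=
    fun u v => mem_sqAdjoin.2 ⟨u, v, by ring⟩
  have h0 := (sqAdjoin a).zero_mem
  obtain ⟨h₁, h₂⟩ := (sqAdjoin a).eq_and_eq_of_add_mul_eq hb (hK x y) (hK z w) h0 h0
    (by linear_combination h)
  obtain ⟨rfl, rfl⟩ := eq_zero_of_sq_add_sq_mul_eq_zero ha h₁
  obtain ⟨rfl, rfl⟩ := eq_zero_of_sq_add_sq_mul_eq_zero ha h₂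
  simp

theorem Derivation.map_sq_eq_zero (D : Derivation ℤ F F) (x : F) : D (x ^ 2) = 0 := by
  rw [sq, Derivation.leibniz, smul_eq_mul, CharTwo.add_self_eq_zero]

theorem Derivation.apply_pfister (D : Derivation ℤ F F) (a b x y z w : F) :
    D (x ^ 2 + a * y ^ 2 + b * z ^ 2 + a * b * w ^ 2) =
      y ^ 2 * D a + z ^ 2 * D b + w ^ 2 * (a * D b + b * D a) := by
  simp only [map_add, Derivation.leibniz, smul_eq_mul, D.map_sq_eq_zero]
  ring

end CharTwo

section Pairing

variable {F : Type*} [Field F] {a b c d : F} {Da Db : Derivation ℤ F F}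

theorem mul_jacobian_eq_of_forall_dlogWedge (ha : a ≠ 0) (hb : b ≠ 0) (hc : c ≠ 0) (hd : d ≠ 0)
    (hω : ∀ D D' : Derivation ℤ F F, D.dlogWedge D' a b + D.dlogWedge D' c d = 0)
    (hDaa : Da a = 1) (hDab : Da b = 0) (hDba : Db a = 0) (hDbb : Db b = 1) :
    a * b * (Da c * Db d - Db c * Da d) = -(c * d) := by
  have h := hω Da Db
  simp only [Derivation.dlogWedge, hDaa, hDab, hDba, hDbb] at h
  field_simp at h
  linear_combination h

theorem apply_eq_zero_of_forall_dlogWedge (hc : c ≠ 0) (hd : d ≠ 0)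
    (hω : ∀ D D' : Derivation ℤ F F, D.dlogWedge D' a b + D.dlogWedge D' c d = 0)
    (hjac : a * b * (Da c * Db d - Db c * Da d) = -(c * d)) {D : Derivation ℤ F F}
    (hDa : D a = 0) (hDb : D b = 0) : D c = 0 ∧ D d = 0 := by
  have hcd : c * d ≠ 0 := mul_ne_zero hc hd
  have h₁ : D c * Da d - Da c * D d = 0 := by
    simpa [Derivation.dlogWedge, hDa, hDb, hcd] using hω D Da
  have h₂ : D c * Db d - Db c * D d = 0 := by
    simpa [Derivation.dlogWedge, hDa, hDb, hcd] using hω D Db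
  constructor
  · refine (mul_eq_zero.1 (?_ : c * d * D c = 0)).resolve_left hcd
    linear_combination D c * hjac - a * b * Da c * h₂ + a * b * Db c * h₁
  · refine (mul_eq_zero.1 (?_ : c * d * D d = 0)).resolve_left hcd
    linear_combination D d * hjac + a * b * Db d * h₁ - a * b * Da d * h₂

end Pairing

section PurePart

variable {F : Type*} [Field F]

/-- The pure part `⟨a, b, ab⟩` of the bilinear Pfister form `⟨⟨a, b⟩⟩`. -/
def purePart (a b : F) (v w : Fin 3 → F) : F :=
  a * v 0 * w 0 + b * v 1 * w 1 + a * b * v 2 * w 2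

theorem exists_linearEquiv_of_isometry {a b c d : F} (hc : c ≠ 0) (hd : d ≠ 0)
    (L : (Fin 3 → F) →ₗ[F] (Fin 3 → F)) (hL : ∀ v w, purePart a b (L v) (L w) = purePart c d v w) :
    ∃ e : (Fin 3 → F) ≃ₗ[F] (Fin 3 → F), ∀ v w, purePart c d (e v) (e w) = purePart a b v w := by
  have hinj : Function.Injective L := by
    rw [← LinearMap.ker_eq_bot, LinearMap.ker_eq_bot']
    intro v hv
    have h : ∀ w, purePart c d v w = 0 := fun w => by rw [← hL, hv]; simp [purePart]
    ext i
    fin_cases i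
    · simpa [purePart, hc] using h (Pi.single 0 1)
    · simpa [purePart, hd] using h (Pi.single 1 1)
    · simpa [purePart, hc, hd] using h (Pi.single 2 1)
  refine ⟨(LinearEquiv.ofInjectiveEndo L hinj).symm, fun v w => ?_⟩
  rw [← hL, ← LinearEquiv.coe_ofInjectiveEndo L hinj, LinearEquiv.apply_symm_apply,
    LinearEquiv.apply_symm_apply]

theorem exists_isometry_of_columns {a b c d : F} (u₁ u₂ u₃ : Fin 3 → F)
    (h₁₁ : purePart a b u₁ u₁ = c) (h₂₂ : purePart a b u₂ u₂ = d)
    (h₃₃ : purePart a b u₃ u₃ = c * d) (h₁₂ : purePart a b u₁ u₂ = 0)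
    (h₁₃ : purePart a b u₁ u₃ = 0) (h₂₃ : purePart a b u₂ u₃ = 0) :
    ∃ L : (Fin 3 → F) →ₗ[F] (Fin 3 → F), ∀ v w, purePart a b (L v) (L w) = purePart c d v w := by
  refine ⟨Matrix.toLin' (Matrix.of fun i j => ![u₁, u₂, u₃] j i), fun v w => ?_⟩
  simp only [purePart, Matrix.toLin'_apply, Matrix.mulVec, dotProduct, Fin.sum_univ_three,
    Matrix.of_apply] at *
  simp only [Matrix.cons_val_zero, Matrix.cons_val_one, Matrix.cons_val_two,
    Matrix.tail_cons, Matrix.head_cons]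
  linear_combination (v 0 * w 0) * h₁₁ + (v 1 * w 1) * h₂₂ + (v 2 * w 2) * h₃₃
    + (v 0 * w 1 + v 1 * w 0) * h₁₂ + (v 0 * w 2 + v 2 * w 0) * h₁₃
    + (v 1 * w 2 + v 2 * w 1) * h₂₃

variable [CharP F 2] {a b p₁ q₁ r₁ s₁ p₂ q₂ r₂ s₂ : F}

theorem exists_isometry_of_orthogonal
    (horth : a * q₁ * q₂ + b * r₁ * r₂ + a * b * s₁ * s₂ = 0) :
    ∃ L : (Fin 3 → F) →ₗ[F] (Fin 3 → F), ∀ v w, purePart a b (L v) (L w) =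
      purePart (a * q₁ ^ 2 + b * r₁ ^ 2 + a * b * s₁ ^ 2)
        (a * q₂ ^ 2 + b * r₂ ^ 2 + a * b * s₂ ^ 2) v w := by
  have h2 : (2 : F) = 0 := CharTwo.two_eq_zero
  -- The third column is a cross product of the first two for `⟨a, b, ab⟩`.
  refine exists_isometry_of_columns ![q₁, r₁, s₁] ![q₂, r₂, s₂]
    ![b * (r₁ * s₂ + s₁ * r₂), a * (q₁ * s₂ + s₁ * q₂), q₁ * r₂ + r₁ * q₂]
    ?_ ?_ ?_ ?_ ?_ ?_ <;>
    simp only [purePart, Matrix.cons_val_zero, Matrix.cons_val_one, Matrix.cons_val_two,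
      Matrix.tail_cons, Matrix.head_cons]
  · ring
  · ring
  · linear_combination (a * q₁ * q₂ + b * r₁ * r₂ + a * b * s₁ * s₂) * horth
      - (a ^ 2 * q₁ ^ 2 * q₂ ^ 2 + b ^ 2 * r₁ ^ 2 * r₂ ^ 2 + a ^ 2 * b ^ 2 * s₁ ^ 2 * s₂ ^ 2) * h2
  · linear_combination horth
  · linear_combination a * b * (q₁ * r₁ * s₂ + q₁ * s₁ * r₂ + r₁ * s₁ * q₂) * h2
  · linear_combination a * b * (q₂ * r₁ * s₂ + q₂ * s₁ * r₂ + r₂ * s₂ * q₁) * h2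

theorem eq_zero_and_orthogonal_of_mul_jacobian
    (hi : ∀ x y z w : F, x ^ 2 + a * y ^ 2 + b * z ^ 2 + a * b * w ^ 2 = 0 →
      x = 0 ∧ y = 0 ∧ z = 0 ∧ w = 0)
    (hc : p₁ ^ 2 + a * q₁ ^ 2 + b * r₁ ^ 2 + a * b * s₁ ^ 2 ≠ 0)
    (hd : p₂ ^ 2 + a * q₂ ^ 2 + b * r₂ ^ 2 + a * b * s₂ ^ 2 ≠ 0)
    (hjac : a * b * ((q₁ ^ 2 + b * s₁ ^ 2) * (r₂ ^ 2 + a * s₂ ^ 2) +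
      (r₁ ^ 2 + a * s₁ ^ 2) * (q₂ ^ 2 + b * s₂ ^ 2)) =
        (p₁ ^ 2 + a * q₁ ^ 2 + b * r₁ ^ 2 + a * b * s₁ ^ 2) *
          (p₂ ^ 2 + a * q₂ ^ 2 + b * r₂ ^ 2 + a * b * s₂ ^ 2)) :
    p₁ = 0 ∧ p₂ = 0 ∧ a * q₁ * q₂ + b * r₁ * r₂ + a * b * s₁ * s₂ = 0 := by
  obtain ⟨h₀, h₁, h₂, h₃⟩ := hi (p₁ * p₂ + a * q₁ * q₂ + b * r₁ * r₂ + a * b * s₁ * s₂)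
    (p₁ * q₂ + p₂ * q₁) (p₁ * r₂ + p₂ * r₁) (p₁ * s₂ + p₂ * s₁) <| by
      simp only [CharTwo.add_sq, mul_pow]
      linear_combination -hjac + a ^ 2 * b ^ 2 * s₁ ^ 2 * s₂ ^ 2 * CharTwo.two_eq_zero (R := F)
  rw [CharTwo.add_eq_zero] at h₁ h₂ h₃
  have hp₂ : p₂ * (p₁ ^ 2 + a * q₁ ^ 2 + b * r₁ ^ 2 + a * b * s₁ ^ 2) = 0 := by
    linear_combination p₁ * h₀ - a * q₁ * h₁ - b * r₁ * h₂ - a * b * s₁ * h₃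
  have hp₁ : p₁ * (p₂ ^ 2 + a * q₂ ^ 2 + b * r₂ ^ 2 + a * b * s₂ ^ 2) = 0 := by
    linear_combination p₂ * h₀ + a * q₂ * h₁ + b * r₂ * h₂ + a * b * s₂ * h₃
  obtain rfl := (mul_eq_zero.1 hp₂).resolve_right hc
  obtain rfl := (mul_eq_zero.1 hp₁).resolve_right hd
  exact ⟨rfl, rfl, by linear_combination h₀⟩

end PurePart

section CharTwo

variable {F : Type*} [Field F] [CharP F 2] {a b c d : F}

theorem exists_orthogonal_of_forall_dlogWedge (ha : a ∉ sqSubfield F) (hb : b ∉ sqAdjoin a)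
    (hc : c ≠ 0) (hd : d ≠ 0)
    (hω : ∀ D D' : Derivation ℤ F F, D.dlogWedge D' a b + D.dlogWedge D' c d = 0) :
    ∃ q₁ r₁ s₁ q₂ r₂ s₂ : F, c = a * q₁ ^ 2 + b * r₁ ^ 2 + a * b * s₁ ^ 2 ∧
      d = a * q₂ ^ 2 + b * r₂ ^ 2 + a * b * s₂ ^ 2 ∧
      a * q₁ * q₂ + b * r₁ * r₂ + a * b * s₁ * s₂ = 0 := by
  have ha₀ : a ≠ 0 := fun h => ha (h ▸ (sqSubfield F).zero_mem)
  have hb₀ : b ≠ 0 := fun h => hb (h ▸ (sqAdjoin a).zero_mem)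
  obtain ⟨Da, hDaa, hDab⟩ := exists_derivation_apply_eq ha hb 1 0
  obtain ⟨Db, hDba, hDbb⟩ := exists_derivation_apply_eq ha hb 0 1
  have hjac := mul_jacobian_eq_of_forall_dlogWedge ha₀ hb₀ hc hd hω hDaa hDab hDba hDbb
  have hvan (D : Derivation ℤ F F) (h₁ : D a = 0) (h₂ : D b = 0) :=
    apply_eq_zero_of_forall_dlogWedge hc hd hω hjac h₁ h₂
  obtain ⟨p₁, q₁, r₁, s₁, rfl⟩ := exists_eq_of_mem_sqAdjoin₂
    (mem_sqAdjoin₂_of_forall_derivation ha hb fun D h₁ h₂ => (hvan D h₁ h₂).1)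
  obtain ⟨p₂, q₂, r₂, s₂, rfl⟩ := exists_eq_of_mem_sqAdjoin₂
    (mem_sqAdjoin₂_of_forall_derivation ha hb fun D h₁ h₂ => (hvan D h₁ h₂).2)
  simp only [Derivation.apply_pfister, hDaa, hDab, hDba, hDbb, CharTwo.sub_eq_add,
    CharTwo.neg_eq] at hjac
  obtain ⟨rfl, rfl, horth⟩ := eq_zero_and_orthogonal_of_mul_jacobian
    (fun _ _ _ _ => eq_zero_of_pfister_eq_zero ha hb) hc hd
    (by linear_combination hjac)
  exact ⟨q₁, r₁, s₁, q₂, r₂, s₂, by ring, by ring, horth⟩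

end CharTwo

/-- if `{a,b}₂ + {c,d}₂ = 0` and `{a,b}₂ ≠ 0`, then
`⟨a,b,ab⟩ ≅ ⟨c,d,cd⟩`; in particular `c = ax² + by² + abz²`. -/
theorem stmt7 (F : Type*) [Field F] [CharP F 2] (a b c d : F)
    (ha : a ≠ 0) (hb : b ≠ 0) (hc : c ≠ 0) (hd : d ≠ 0)
    (hsum : s2 1 a b + s2 1 c d = (0 : KMod F 2 1))
    (hab : s2 1 a b ≠ (0 : KMod F 2 1)) :
    (∃ e : (Fin 3 → F) ≃ₗ[F] (Fin 3 → F), ∀ v w : Fin 3 → F,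
      c * e v 0 * e w 0 + d * e v 1 * e w 1 + c * d * e v 2 * e w 2 =
        a * v 0 * w 0 + b * v 1 * w 1 + a * b * v 2 * w 2) ∧
    ∃ x y z : F, c = a * x ^ 2 + b * y ^ 2 + a * b * z ^ 2 := by
  have hω (D D' : Derivation ℤ F F) : D.dlogWedge D' a b + D.dlogWedge D' c d = 0 := by
    simpa only [map_add, map_zero, D.kModDlogWedge_s2 D' ha hb, D.kModDlogWedge_s2 D' hc hd]
      using congrArg (D.kModDlogWedge D') hsum
  obtain ⟨q₁, r₁, s₁, q₂, r₂, s₂, rfl, rfl, horth⟩ := exists_orthogonal_of_forall_dlogWedge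
    (notMem_sqSubfield_of_s2_ne_zero ha hb hab) (notMem_sqAdjoin_of_s2_ne_zero ha hb hab) hc hd hω
  obtain ⟨L, hL⟩ := exists_isometry_of_orthogonal horth
  exact ⟨exists_linearEquiv_of_isometry hc hd L hL, q₁, r₁, s₁, rfl⟩
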